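/- For every integer m ≥ 1, every nonzero real number can be written as the product of two m-ultra numbers. -/

import Mathlib

open Polynomial

/-- The primitive minimal polynomial over ℤ of a real number. -/
noncomputable def intMinpoly (α : ℝ) : Polynomial ℤ :=
  (IsLocalization.integerNormalization (nonZeroDivisors ℤ) (minpoly ℚ α)).primPart

/-- The height of an algebraic number: the maximum of the absolute values of the
coefficients of its primitive minimal polynomial over ℤ. -/
noncomputable def algHeight (α : ℝ) : ℕ :=
  (intMinpoly α).support.sup fun i => ((intMinpoly α).coeff i).natAbs

/-- `α` is a real algebraic number of degree exactly `m`. -/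
def DegreeExactly (m : ℕ) (α : ℝ) : Prop :=
  IsAlgebraic ℚ α ∧ (minpoly ℚ α).natDegree = m

/-- `exp^[3](x) = e^(e^(e^x))`. -/
noncomputable def expCube (x : ℝ) : ℝ := Real.exp (Real.exp (Real.exp x))

/-- `ξ` is an `m`-ultra number: there is a sequence `(α_n)_{n ≥ 1}` of pairwise distinct
real algebraic numbers of degree exactly `m` with
`0 < |ξ - α_n| < (exp^[3](H(α_n)))^{-n}` for all `n ≥ 1`. Here `a k` plays the
role of `α_{k+1}`. -/
def IsMUltra (m : ℕ) (ξ : ℝ) : Prop :=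
  ∃ a : ℕ → ℝ, Function.Injective a ∧
    ∀ n : ℕ, DegreeExactly m (a n) ∧ 0 < |ξ - a n| ∧
      |ξ - a n| < (expCube (algHeight (a n)))⁻¹ ^ (n + 1)

/-- A function `f : ℝ → ℝ` is transcendental if the only complex two-variable polynomial
`P` with `P (x, f x) = 0` for all real `x` is the zero polynomial. -/
def TranscendentalFun (f : ℝ → ℝ) : Prop :=
  ∀ P : MvPolynomial (Fin 2) ℂ,
    (∀ x : ℝ, MvPolynomial.eval ![(x : ℂ), (f x : ℂ)] P = 0) → P = 0

/-!
For each `n`, the set of `ξ` with `0 < |ξ - α| < exp^[3](H(α))^{-(n+1)}` for some `α` of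
degree `m` is open, and it is dense because the numbers `2^{1/m} + q`, `q ∈ ℚ`, have degree `m`
and are dense. A point lying in all of these sets is `m`-ultra: its approximation distances tend
to `0`, so along a subsequence on which they strictly decrease the approximants are pairwise
distinct. Hence `m`-ultra numbers form a residual set. As `a ↦ x / a` is a homeomorphism of
`ℝ ∖ {0}`, the `a` with `x / a` `m`-ultra form a residual set too, and by Baire's theorem some
`a ≠ 0` lies in both, giving `x = a * (x / a)`.
-/

open Filter Topology

lemma irreducible_X_pow_sub_two_int {m : ℕ} (hm : 0 < m) : Irreducible (X ^ m - C (2 : ℤ)) := by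
  have hmonic := monic_X_pow_sub_C (2 : ℤ) hm.ne'
  have hdeg : (X ^ m - C (2 : ℤ)).natDegree = m := natDegree_X_pow_sub_C
  have hcoeff (n : ℕ) : (X ^ m - C (2 : ℤ)).coeff n =
      (if n = m then 1 else 0) - if n = 0 then 2 else 0 := by
    rw [coeff_sub, coeff_X_pow, coeff_C]
  have hprime : (Ideal.span {(2 : ℤ)}).IsPrime :=
    (Ideal.span_singleton_prime two_ne_zero).2 Int.prime_two
  refine IsEisensteinAt.irreducible (hmonic.isEisensteinAt_of_mem_of_notMem hprime.ne_top
    (fun {n} hn => ?_) ?_) hprime hmonic.isPrimitive (hdeg.symm ▸ hm)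
  · rw [hdeg] at hn
    rw [hcoeff, if_neg hn.ne, Ideal.mem_span_singleton]
    split_ifs <;> norm_num
  · rw [hcoeff, if_neg hm.ne, Ideal.span_singleton_pow, Ideal.mem_span_singleton]
    norm_num

lemma irreducible_X_pow_sub_two {m : ℕ} (hm : 0 < m) : Irreducible (X ^ m - C (2 : ℚ)) := by
  rw [show C (2 : ℚ) = 2 from map_ofNat C 2]
  simpa using ((monic_X_pow_sub_C (2 : ℤ) hm.ne').irreducible_iff_irreducible_map_fraction_map
    (K := ℚ)).1 (irreducible_X_pow_sub_two_int hm)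

lemma minpoly_two_rpow_inv {m : ℕ} (hm : 0 < m) :
    minpoly ℚ ((2 : ℝ) ^ (m : ℝ)⁻¹) = X ^ m - C 2 := by
  refine (minpoly.eq_of_irreducible_of_monic (irreducible_X_pow_sub_two hm) ?_
    (monic_X_pow_sub_C _ hm.ne')).symm
  simp [Real.rpow_inv_natCast_pow zero_le_two hm.ne']

lemma degreeExactly_two_rpow_inv_add_rat {m : ℕ} (hm : 0 < m) (q : ℚ) :
    DegreeExactly m ((2 : ℝ) ^ (m : ℝ)⁻¹ + q) := by
  have hint : IsIntegral ℚ ((2 : ℝ) ^ (m : ℝ)⁻¹) :=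
    minpoly.ne_zero_iff.1 (minpoly_two_rpow_inv hm ▸ X_pow_sub_C_ne_zero hm 2)
  refine ⟨(hint.add isIntegral_algebraMap).isAlgebraic, ?_⟩
  rw [← eq_ratCast (algebraMap ℚ ℝ), minpoly.add_algebraMap, natDegree_comp,
    minpoly_two_rpow_inv hm]
  simp

lemma dense_setOf_degreeExactly {m : ℕ} (hm : 0 < m) : Dense {α : ℝ | DegreeExactly m α} := by
  have hrange : DenseRange fun q : ℚ => (2 : ℝ) ^ (m : ℝ)⁻¹ + q :=
    (add_left_surjective _).denseRange.comp Rat.denseRange_cast (continuous_const_add _)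
  exact hrange.mono (Set.range_subset_iff.2 (degreeExactly_two_rpow_inv_add_rat hm))

lemma two_le_expCube (y : ℝ) : 2 ≤ expCube y := by
  have h := Real.add_one_le_exp (Real.exp (Real.exp y))
  have := Real.one_le_exp (Real.exp_nonneg y)
  unfold expCube; linarith

def ultraApproxSet (m n : ℕ) : Set ℝ :=
  ⋃ (α : ℝ) (_ : DegreeExactly m α), Metric.ball α ((expCube (algHeight α))⁻¹ ^ (n + 1)) \ {α}

lemma isOpen_ultraApproxSet (m n : ℕ) : IsOpen (ultraApproxSet m n) :=
  isOpen_biUnion fun _ _ => Metric.isOpen_ball.sdiff isClosed_singleton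

lemma dense_ultraApproxSet {m : ℕ} (hm : 0 < m) (n : ℕ) : Dense (ultraApproxSet m n) := by
  refine dense_closure.1 ((dense_setOf_degreeExactly hm).mono fun α hα => ?_)
  have hr : 0 < (expCube (algHeight α))⁻¹ ^ (n + 1) :=
    pow_pos (inv_pos.2 (zero_lt_two.trans_le (two_le_expCube _))) _
  refine closure_mono (Set.subset_biUnion_of_mem (u := fun α => _) hα) ?_
  rw [Set.sdiff_eq]
  exact (dense_compl_singleton α).open_subset_closure_inter Metric.isOpen_ball
    (Metric.mem_ball_self hr)

lemma exists_strictAnti_subseq_of_tendsto {α : Type*} [LinearOrder α] [TopologicalSpace α]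
    [OrderTopology α] {d : ℕ → α} {a : α} (hgt : ∀ n, a < d n) (hlim : Tendsto d atTop (𝓝 a)) :
    ∃ φ : ℕ → ℕ, StrictMono φ ∧ StrictAnti (d ∘ φ) := by
  obtain ⟨g, hdec | hnondec⟩ := exists_increasing_or_nonincreasing_subseq (· > ·) d
  · exact ⟨g, g.strictMono, fun m n hmn => hdec m n hmn⟩
  · obtain ⟨N, hN⟩ := ((hlim.comp g.strictMono.tendsto_atTop).eventually
      (gt_mem_nhds (hgt (g 0)))).exists_forall_of_atTop
    exact absurd (hN (N + 1) N.le_succ) (hnondec 0 (N + 1) N.succ_pos)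

lemma isMUltra_of_forall_mem_ultraApproxSet {m : ℕ} {ξ : ℝ}
    (h : ∀ n, ξ ∈ ultraApproxSet m n) : IsMUltra m ξ := by
  simp only [ultraApproxSet, Set.mem_iUnion, Set.mem_sdiff, Metric.mem_ball,
    Set.mem_singleton_iff, Real.dist_eq] at h
  choose w hdeg hlt hne using h
  have hr (α : ℝ) : 0 ≤ (expCube (algHeight α))⁻¹ ∧ (expCube (algHeight α))⁻¹ ≤ 1 / 2 := by
    have := two_le_expCube (algHeight α)
    exact ⟨inv_nonneg.2 (by linarith), by rw [one_div]; exact inv_anti₀ two_pos this⟩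
  have hpos (n : ℕ) : 0 < |ξ - w n| := abs_pos.2 (sub_ne_zero.2 (hne n))
  have hsmall (n : ℕ) : |ξ - w n| ≤ (1 / 2) ^ (n + 1) :=
    (hlt n).le.trans (pow_le_pow_left₀ (hr _).1 (hr _).2 _)
  have hlim : Tendsto (fun n => |ξ - w n|) atTop (𝓝 0) :=
    squeeze_zero (fun n => (hpos n).le) hsmall
      ((tendsto_pow_atTop_nhds_zero_of_lt_one (by norm_num) (by norm_num)).comp
        (tendsto_add_atTop_nat 1))
  obtain ⟨φ, hφ, hanti⟩ := exists_strictAnti_subseq_of_tendsto hpos hlim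
  refine ⟨w ∘ φ, Function.Injective.of_comp (f := fun α => |ξ - α|) hanti.injective,
    fun n => ⟨hdeg _, hpos _, (hlt _).trans_le ?_⟩⟩
  exact pow_le_pow_of_le_one (hr _).1 ((hr _).2.trans (by norm_num)) (by simpa using hφ.id_le n)

lemma eventually_residual_isMUltra {m : ℕ} (hm : 0 < m) : ∀ᶠ ξ in residual ℝ, IsMUltra m ξ :=
  mem_of_superset (countable_iInter_mem.2 fun n => residual_of_dense_open
    (isOpen_ultraApproxSet m n) (dense_ultraApproxSet hm n)) fun _ hξ =>
      isMUltra_of_forall_mem_ultraApproxSet (Set.mem_iInter.1 hξ)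

lemma tendsto_div_residual {𝕜 : Type*} [NontriviallyNormedField 𝕜] {x : 𝕜} (hx : x ≠ 0) :
    Tendsto (x / ·) (residual 𝕜) (residual 𝕜) := by
  have hcont : ContinuousOn (x / ·) {(0 : 𝕜)}ᶜ :=
    continuousOn_const.div continuousOn_id fun _ h => h
  have hinv {a : 𝕜} (ha : a ≠ 0) : x / (x / a) = a := div_div_cancel₀ hx
  refine le_countableGenerate_iff_of_countableInterFilter.2 fun U ⟨hUo, hUd⟩ => mem_map.2 <|
    mem_of_superset (residual_of_dense_open
      (hcont.isOpen_inter_preimage isOpen_compl_singleton hUo) ?_) Set.inter_subset_right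
  refine dense_iff_inter_open.2 fun W hWo hWne => ?_
  obtain ⟨w, hwW, hw0⟩ := (dense_compl_singleton (0 : 𝕜)).inter_open_nonempty W hWo hWne
  obtain ⟨u, ⟨hu0, huW⟩, huU⟩ := hUd.inter_open_nonempty _
    (hcont.isOpen_inter_preimage isOpen_compl_singleton hWo)
    ⟨x / w, div_ne_zero hx hw0, by simpa [hinv hw0] using hwW⟩
  exact ⟨x / u, huW, div_ne_zero hx hu0, by simpa [hinv hu0] using huU⟩

/-- Every nonzero real number is the product of two `m`-ultra numbers. -/
theorem stmt_6 (m : ℕ) (hm : 1 ≤ m) (x : ℝ) (hx : x ≠ 0) :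
    ∃ a b : ℝ, IsMUltra m a ∧ IsMUltra m b ∧ x = a * b := by
  have hultra := eventually_residual_isMUltra hm
  obtain ⟨a, ⟨ha, hxa⟩, ha0⟩ := (dense_of_mem_residual ((hultra.and
    ((tendsto_div_residual hx).eventually hultra)).and
    (residual_of_dense_open isOpen_compl_singleton (dense_compl_singleton 0)))).nonempty
  exact ⟨a, x / a, ha, hxa, (mul_div_cancel₀ x ha0).symm⟩
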